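/- Let H₁, H₂ : ℝⁿ × ℝⁿ → ℝ be C², ℤⁿ-periodic in the first argument, and let ε > 0. Let (w₁,w₂) be smooth functions on ℝⁿ × [0,1], ℤⁿ-periodic in x, solving ε (w_i)_t + H_i(x,Dw_i) + w_i − w_j = ε⁴Δw_i for i = 1,2 (where j = 3−i), and let (σ₁,σ₂) be smooth functions on ℝⁿ × [0,1], ℤⁿ-periodic in x, solving the adjoint system −ε (σ_i)_t − div(D_pH_i(x,Dw_i)σ_i) + σ_i − σ_j = ε⁴Δσ_i for i = 1,2. Then the function t ↦ ∫_Q ∑_{i=1}^{2} ( H_i(x,Dw_i(x,t)) + w_i(x,t) − w_j(x,t) − ε⁴Δw_i(x,t) ) σ_i(x,t) dx is constant on [0,1] (conservation of energy for the weakly coupled system). -/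

import Mathlib

open MeasureTheory Finset

noncomputable section

/-- Partial derivative of `f` at `x` in the `i`-th coordinate direction. -/
def pd {n : ℕ} (f : (Fin n → ℝ) → ℝ) (i : Fin n) (x : Fin n → ℝ) : ℝ :=
  fderiv ℝ f x (Pi.single i 1)

/-- Squared euclidean norm of the (spatial) gradient, `|Df(x)|²`. -/
def gradSq {n : ℕ} (f : (Fin n → ℝ) → ℝ) (x : Fin n → ℝ) : ℝ :=
  ∑ i, (pd f i x) ^ 2

/-- Laplacian of `f` at `x`. -/
def lap {n : ℕ} (f : (Fin n → ℝ) → ℝ) (x : Fin n → ℝ) : ℝ :=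
  ∑ i, pd (pd f i) i x

/-- Sum of squares of all second spatial derivatives, `|D²f(x)|²`. -/
def hessSq {n : ℕ} (f : (Fin n → ℝ) → ℝ) (x : Fin n → ℝ) : ℝ :=
  ∑ i, ∑ j, (pd (pd f i) j x) ^ 2

/-- `ℤⁿ`-periodicity of a function on `ℝⁿ`. -/
def ZPer {n : ℕ} (f : (Fin n → ℝ) → ℝ) : Prop :=
  ∀ (x : Fin n → ℝ) (k : Fin n → ℤ), f (x + fun i => (k i : ℝ)) = f x

/-- `i`-th component of `D_pH(x,p)`. -/
def DpH {n : ℕ} (H : (Fin n → ℝ) → (Fin n → ℝ) → ℝ) (x p : Fin n → ℝ) (i : Fin n) : ℝ :=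
  fderiv ℝ (fun q => H x q) p (Pi.single i 1)

/-- `i`-th component of `D_xH(x,p)`. -/
def DxH {n : ℕ} (H : (Fin n → ℝ) → (Fin n → ℝ) → ℝ) (x p : Fin n → ℝ) (i : Fin n) : ℝ :=
  fderiv ℝ (fun y => H y p) x (Pi.single i 1)

/-- `(i,j)` entry of the Hessian in `p`, `D²_{pp}H(x,p)`. -/
def D2pH {n : ℕ} (H : (Fin n → ℝ) → (Fin n → ℝ) → ℝ) (x p : Fin n → ℝ) (i j : Fin n) : ℝ :=
  fderiv ℝ (fun q => DpH H x q i) p (Pi.single j 1)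

/-- Spatial gradient of a time-dependent function. -/
def Dsp {n : ℕ} (w : (Fin n → ℝ) → ℝ → ℝ) (x : Fin n → ℝ) (t : ℝ) : Fin n → ℝ :=
  fun i => pd (fun y => w y t) i x

/-- The unit cube `Q = [0,1]ⁿ`, a fundamental domain for the torus `𝕋ⁿ`. -/
def cube (n : ℕ) : Set (Fin n → ℝ) := Set.Icc 0 1

/-! ### auxiliary machinery -/

variable {n : ℕ}

def DD (F : ((Fin n → ℝ) × ℝ) → ℝ) (v : (Fin n → ℝ) × ℝ) (q : (Fin n → ℝ) × ℝ) : ℝ :=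
  fderiv ℝ F q v

def et {n : ℕ} : (Fin n → ℝ) × ℝ := (0, 1)

def ex {n : ℕ} (i : Fin n) : (Fin n → ℝ) × ℝ := (Pi.single i 1, 0)

lemma DD.contDiff {F : ((Fin n → ℝ) × ℝ) → ℝ} (hF : ContDiff ℝ (⊤ : ℕ∞) F) (v : (Fin n → ℝ) × ℝ) :
    ContDiff ℝ (⊤ : ℕ∞) (DD F v) :=
  (hF.fderiv_right ((by simp))).clm_apply contDiff_const

lemma DD_eq_snd {F : ((Fin n → ℝ) × ℝ) → ℝ} (hF : ContDiff ℝ (⊤ : ℕ∞) F) (v u : (Fin n → ℝ) × ℝ)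
    (q : (Fin n → ℝ) × ℝ) :
    DD (DD F v) u q = (fderiv ℝ (fderiv ℝ F) q) u v := by
  have hc : DifferentiableAt ℝ (fderiv ℝ F) q :=
    ((hF.fderiv_right (m := 1) (by exact WithTop.coe_le_coe.2 le_top)).differentiable one_ne_zero) q
  show fderiv ℝ (fun p => (fderiv ℝ F p) v) q u = _
  rw [fderiv_clm_apply hc (differentiableAt_const v)]
  simp

lemma DD.comm {F : ((Fin n → ℝ) × ℝ) → ℝ} (hF : ContDiff ℝ (⊤ : ℕ∞) F) (v u : (Fin n → ℝ) × ℝ) :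
    DD (DD F v) u = DD (DD F u) v := by
  funext q
  rw [DD_eq_snd hF, DD_eq_snd hF]
  exact second_derivative_symmetric (fun y => (hF.differentiable (by simp) y).hasFDerivAt)
    (((hF.fderiv_right (m := 1) (by exact WithTop.coe_le_coe.2 le_top)).differentiable one_ne_zero) q).hasFDerivAt u v

lemma hasFDerivAt_sliceX {F : ((Fin n → ℝ) × ℝ) → ℝ} {x : Fin n → ℝ} {t : ℝ}
    (hF : DifferentiableAt ℝ F (x, t)) :
    HasFDerivAt (fun y => F (y, t)) ((fderiv ℝ F (x, t)).comp
      (ContinuousLinearMap.inl ℝ (Fin n → ℝ) ℝ)) x :=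
  hF.hasFDerivAt.comp x (hasFDerivAt_prodMk_left x t)

lemma pd_slice {F : ((Fin n → ℝ) × ℝ) → ℝ} (hF : ContDiff ℝ (⊤ : ℕ∞) F) (i : Fin n)
    (x : Fin n → ℝ) (t : ℝ) :
    pd (fun y => F (y, t)) i x = DD F (ex i) (x, t) := by
  have := (hasFDerivAt_sliceX (hF.differentiable (by simp) (x, t))).fderiv
  show fderiv ℝ (fun y => F (y, t)) x (Pi.single i 1) = _
  rw [this]; rfl

lemma hasDerivAt_sliceT {F : ((Fin n → ℝ) × ℝ) → ℝ} {x : Fin n → ℝ} {t : ℝ}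
    (hF : DifferentiableAt ℝ F (x, t)) :
    HasDerivAt (fun s => F (x, s)) (DD F et (x, t)) t := by
  have h := (hF.hasFDerivAt.comp t (hasFDerivAt_prodMk_right x t)).hasDerivAt
  simpa [et, DD, Function.comp_def] using h

lemma deriv_sliceT {F : ((Fin n → ℝ) × ℝ) → ℝ} {x : Fin n → ℝ} {t : ℝ}
    (hF : DifferentiableAt ℝ F (x, t)) :
    deriv (fun s => F (x, s)) t = DD F et (x, t) :=
  (hasDerivAt_sliceT hF).deriv

lemma contDiff_sliceX {F : ((Fin n → ℝ) × ℝ) → ℝ} {m : WithTop ℕ∞} (hF : ContDiff ℝ m F) (t : ℝ) :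
    ContDiff ℝ m (fun y => F (y, t)) :=
  hF.comp (contDiff_id.prodMk contDiff_const)

/-- curried wrappers -/
lemma derivT_eq {w : (Fin n → ℝ) → ℝ → ℝ}
    (hw : ContDiff ℝ (⊤ : ℕ∞) (fun q : (Fin n → ℝ) × ℝ => w q.1 q.2)) (x : Fin n → ℝ) (t : ℝ) :
    deriv (w x) t = DD (fun q : (Fin n → ℝ) × ℝ => w q.1 q.2) et (x, t) :=
  deriv_sliceT (hw.differentiable (by simp) (x, t))

lemma pdw_eq {w : (Fin n → ℝ) → ℝ → ℝ}
    (hw : ContDiff ℝ (⊤ : ℕ∞) (fun q : (Fin n → ℝ) × ℝ => w q.1 q.2)) (i : Fin n)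
    (x : Fin n → ℝ) (t : ℝ) :
    pd (fun y => w y t) i x = DD (fun q : (Fin n → ℝ) × ℝ => w q.1 q.2) (ex i) (x, t) :=
  pd_slice hw i x t

lemma Dsp_eq {w : (Fin n → ℝ) → ℝ → ℝ}
    (hw : ContDiff ℝ (⊤ : ℕ∞) (fun q : (Fin n → ℝ) × ℝ => w q.1 q.2)) (x : Fin n → ℝ) (t : ℝ) :
    Dsp w x t = fun i => DD (fun q : (Fin n → ℝ) × ℝ => w q.1 q.2) (ex i) (x, t) :=
  funext fun i => pdw_eq hw i x t

lemma lap_slice {F : ((Fin n → ℝ) × ℝ) → ℝ} (hF : ContDiff ℝ (⊤ : ℕ∞) F) (x : Fin n → ℝ) (t : ℝ) :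
    lap (fun y => F (y, t)) x = ∑ k, DD (DD F (ex k)) (ex k) (x, t) := by
  unfold lap
  refine Finset.sum_congr rfl fun k _ => ?_
  have h1 : pd (fun y => F (y, t)) k = fun y => DD F (ex k) (y, t) :=
    funext fun y => pd_slice hF k y t
  rw [h1]
  exact pd_slice (DD.contDiff hF (ex k)) k x t

lemma pd_mul {f g : (Fin n → ℝ) → ℝ} {x : Fin n → ℝ} (hf : DifferentiableAt ℝ f x)
    (hg : DifferentiableAt ℝ g x) (i : Fin n) :
    pd (fun y => f y * g y) i x = pd f i x * g x + f x * pd g i x := by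
  unfold pd
  rw [fderiv_fun_mul hf hg]
  simp only [ContinuousLinearMap.add_apply, ContinuousLinearMap.smul_apply, smul_eq_mul]
  ring

lemma clm_apply_eq_sum (L : (Fin n → ℝ) →L[ℝ] ℝ) (v : Fin n → ℝ) :
    L v = ∑ i, v i * L (Pi.single i 1) := by
  have hv : v = ∑ i, (v i) • (Pi.single i 1 : Fin n → ℝ) := by
    funext j
    rw [Finset.sum_apply]
    simp [Pi.single_apply]
  calc L v = L (∑ i, (v i) • (Pi.single i 1 : Fin n → ℝ)) := by rw [← hv]
    _ = ∑ i, v i * L (Pi.single i 1) := by rw [map_sum]; simp [smul_eq_mul]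

lemma integral_div_zero (V : Fin n → (Fin n → ℝ) → ℝ)
    (hV : ∀ i, ContDiff ℝ 1 (V i)) (hper : ∀ i, ZPer (V i)) :
    ∫ x in cube n, (∑ i, pd (V i) i x) = 0 := by
  rcases n with - | m
  · simp
  · have hle : (0 : Fin (m+1) → ℝ) ≤ 1 := fun i => by norm_num
    have key := MeasureTheory.integral_divergence_of_hasFDerivAt_off_countable'
      (a := (0 : Fin (m+1) → ℝ)) (b := 1) hle V
      (fun i x => fderiv ℝ (V i) x) ∅ Set.countable_empty
      (fun i => ((hV i).continuous).continuousOn)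
      (fun x _ i => ((hV i).differentiable one_ne_zero x).hasFDerivAt)
      (by
        apply (ContinuousOn.integrableOn_compact isCompact_Icc)
        exact (continuous_finset_sum _ fun i _ =>
          ((hV i).continuous_fderiv one_ne_zero).clm_apply continuous_const).continuousOn)
    have hfaces : ∀ i : Fin (m+1), (∫ (x : Fin m → ℝ) in
          Set.Icc ((0 : Fin (m+1) → ℝ) ∘ i.succAbove) ((1 : Fin (m+1) → ℝ) ∘ i.succAbove),
          V i (i.insertNth ((1 : Fin (m+1) → ℝ) i) x)) =
        ∫ (x : Fin m → ℝ) in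
          Set.Icc ((0 : Fin (m+1) → ℝ) ∘ i.succAbove) ((1 : Fin (m+1) → ℝ) ∘ i.succAbove),
          V i (i.insertNth ((0 : Fin (m+1) → ℝ) i) x) := by
      intro i
      apply setIntegral_congr_fun (measurableSet_Icc)
      intro x _
      have harg : i.insertNth ((1 : Fin (m+1) → ℝ) i) x
          = i.insertNth ((0 : Fin (m+1) → ℝ) i) x
            + fun j => (((Pi.single i 1 : Fin (m+1) → ℤ) j : ℝ)) := by
        funext j
        rcases eq_or_ne j i with rfl | hj
        · simp
        · obtain ⟨k, rfl⟩ := Fin.exists_succAbove_eq hj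
          simp [Fin.insertNth_apply_succAbove, Pi.single_apply, (Fin.succAbove_ne i k)]
      simp only []
      rw [harg, hper i]
    rw [show cube (m+1) = Set.Icc 0 1 from rfl] at *
    calc (∫ x in Set.Icc (0:Fin (m+1) → ℝ) 1, ∑ i, pd (V i) i x) = _ := key
      _ = 0 := by
        rw [Finset.sum_eq_zero]
        intro i _
        rw [hfaces i, sub_self]

lemma zero_deriv_of_zero_on_Icc (φ ψ : ℝ → ℝ) (hψ : Continuous ψ)
    (hd : ∀ t, HasDerivAt φ (ψ t) t) (h0 : ∀ t ∈ Set.Icc (0:ℝ) 1, φ t = 0) :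
    ∀ t ∈ Set.Icc (0:ℝ) 1, ψ t = 0 := by
  have hIoo : ∀ t ∈ Set.Ioo (0:ℝ) 1, ψ t = 0 := by
    intro t ht
    have hev : φ =ᶠ[nhds t] (fun _ => (0:ℝ)) := by
      filter_upwards [isOpen_Ioo.mem_nhds ht] with s hs
      exact h0 s (Set.Ioo_subset_Icc_self hs)
    have h1 : HasDerivAt (fun _ : ℝ => (0:ℝ)) (ψ t) t := (hd t).congr_of_eventuallyEq hev.symm
    exact h1.unique (hasDerivAt_const t 0)
  intro t ht
  have htc : t ∈ closure (Set.Ioo (0:ℝ) 1) := by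
    rw [closure_Ioo (by norm_num : (0:ℝ) ≠ 1)]; exact ht
  have hne : (nhdsWithin t (Set.Ioo (0:ℝ) 1)).NeBot :=
    mem_closure_iff_nhdsWithin_neBot.1 htc
  have h1 : Filter.Tendsto ψ (nhdsWithin t (Set.Ioo (0:ℝ) 1)) (nhds (ψ t)) :=
    (hψ.continuousAt).continuousWithinAt
  have h2 : Filter.Tendsto ψ (nhdsWithin t (Set.Ioo (0:ℝ) 1)) (nhds 0) := by
    apply Filter.Tendsto.congr' _ tendsto_const_nhds
    filter_upwards [self_mem_nhdsWithin] with s hs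
    exact (hIoo s hs).symm
  exact tendsto_nhds_unique h1 h2

lemma fderiv_translate {E : Type*} [NormedAddCommGroup E] [NormedSpace ℝ E]
    (f : E → ℝ) (c : E) (hf : ∀ x, f (x + c) = f x) (x : E)
    (hd : DifferentiableAt ℝ f (x + c)) :
    fderiv ℝ f (x + c) = fderiv ℝ f x := by
  have h1 : HasFDerivAt (fun y => f (y + c)) (fderiv ℝ f (x + c)) x := by
    have := hd.hasFDerivAt.comp x ((hasFDerivAt_id x).add_const c)
    simpa [Function.comp_def] using this
  have h2 : (fun y => f (y + c)) = f := funext hf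
  rw [h2] at h1
  exact h1.fderiv.symm ▸ rfl

/-- periodicity in the space variable for functions on `ℝⁿ × ℝ`. -/
def ZPerP (F : ((Fin n → ℝ) × ℝ) → ℝ) : Prop :=
  ∀ (x : Fin n → ℝ) (t : ℝ) (k : Fin n → ℤ), F (x + fun i => (k i : ℝ), t) = F (x, t)

lemma ZPerP_of_per {w : (Fin n → ℝ) → ℝ → ℝ} (hwper : ∀ t, ZPer (fun y => w y t)) :
    ZPerP (fun q : (Fin n → ℝ) × ℝ => w q.1 q.2) :=
  fun x t k => hwper t x k

lemma ZPerP.dd {F : ((Fin n → ℝ) × ℝ) → ℝ} (hF : ContDiff ℝ (⊤ : ℕ∞) F) (hp : ZPerP F)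
    (v : (Fin n → ℝ) × ℝ) : ZPerP (DD F v) := by
  intro x t k
  have hc : ∀ p : (Fin n → ℝ) × ℝ, F (p + ((fun i => (k i : ℝ)), 0)) = F p := by
    intro p
    have h := hp p.1 p.2 k
    have hq : p + ((fun i => (k i : ℝ)), (0:ℝ)) = (p.1 + fun i => (k i : ℝ), p.2) := by
      ext <;> simp
    rw [hq]; exact h
  have harg : ((x + fun i => (k i : ℝ)), t) = (x, t) + ((fun i => (k i : ℝ)), (0:ℝ)) := by
    ext <;> simp
  show fderiv ℝ F _ v = fderiv ℝ F (x, t) v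
  rw [harg, fderiv_translate F _ hc (x, t) (hF.differentiable (by simp) _)]

lemma DpH_eq {H : (Fin n → ℝ) → (Fin n → ℝ) → ℝ} (hH : ContDiff ℝ 2 (Function.uncurry H))
    (x p : Fin n → ℝ) (i : Fin n) :
    DpH H x p i = fderiv ℝ (Function.uncurry H) (x, p) (0, Pi.single i 1) := by
  have hd : DifferentiableAt ℝ (Function.uncurry H) (x, p) :=
    hH.differentiable (by norm_num) (x, p)
  have h : HasFDerivAt (fun q => H x q) ((fderiv ℝ (Function.uncurry H) (x, p)).comp
      (ContinuousLinearMap.inr ℝ (Fin n → ℝ) (Fin n → ℝ))) p :=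
    hd.hasFDerivAt.comp p (hasFDerivAt_prodMk_right x p)
  show fderiv ℝ (fun q => H x q) p (Pi.single i 1) = _
  rw [h.fderiv]; rfl

lemma DpH_translate {H : (Fin n → ℝ) → (Fin n → ℝ) → ℝ}
    (hper : ∀ p, ZPer (fun x => H x p)) (x p : Fin n → ℝ) (k : Fin n → ℤ) (i : Fin n) :
    DpH H (x + fun j => (k j : ℝ)) p i = DpH H x p i := by
  unfold DpH
  have : (fun q => H (x + fun j => (k j : ℝ)) q) = fun q => H x q :=
    funext fun q => hper q x k
  rw [this]

lemma lapw_eq {w : (Fin n → ℝ) → ℝ → ℝ}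
    (hw : ContDiff ℝ (⊤ : ℕ∞) (fun q : (Fin n → ℝ) × ℝ => w q.1 q.2)) (x : Fin n → ℝ) (t : ℝ) :
    lap (fun y => w y t) x
      = ∑ k, DD (DD (fun q : (Fin n → ℝ) × ℝ => w q.1 q.2) (ex k)) (ex k) (x, t) :=
  lap_slice hw x t

lemma derived_pde {H : (Fin n → ℝ) → (Fin n → ℝ) → ℝ}
    (hH : ContDiff ℝ 2 (Function.uncurry H))
    {w w' : (Fin n → ℝ) → ℝ → ℝ}
    (hw : ContDiff ℝ (⊤ : ℕ∞) (fun q : (Fin n → ℝ) × ℝ => w q.1 q.2))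
    (hw' : ContDiff ℝ (⊤ : ℕ∞) (fun q : (Fin n → ℝ) × ℝ => w' q.1 q.2))
    (ε : ℝ)
    (hpde : ∀ (x : Fin n → ℝ), ∀ t ∈ Set.Icc (0:ℝ) 1,
      ε * deriv (w x) t + H x (Dsp w x t) + w x t - w' x t = ε ^ 4 * lap (fun y => w y t) x) :
    ∀ (x : Fin n → ℝ), ∀ t ∈ Set.Icc (0:ℝ) 1,
      ε * DD (DD (fun q : (Fin n → ℝ) × ℝ => w q.1 q.2) et) et (x, t)
        + (∑ k, DpH H x (Dsp w x t) k *
            DD (DD (fun q : (Fin n → ℝ) × ℝ => w q.1 q.2) (ex k)) et (x, t))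
        + DD (fun q : (Fin n → ℝ) × ℝ => w q.1 q.2) et (x, t)
        - DD (fun q : (Fin n → ℝ) × ℝ => w' q.1 q.2) et (x, t)
      = ε ^ 4 * ∑ k, DD (DD (DD (fun q : (Fin n → ℝ) × ℝ => w q.1 q.2) (ex k)) (ex k)) et
          (x, t) := by
  intro x
  have hHx : ContDiff ℝ 2 (fun q : Fin n → ℝ => H x q) :=
    hH.comp (contDiff_const.prodMk contDiff_id)
  -- abbreviations (function level)
  let W : ((Fin n → ℝ) × ℝ) → ℝ := fun q => w q.1 q.2
  let W' : ((Fin n → ℝ) × ℝ) → ℝ := fun q => w' q.1 q.2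
  let p : ℝ → (Fin n → ℝ) := fun s => fun i => DD W (ex i) (x, s)
  let φ : ℝ → ℝ := fun s => ε * DD W et (x, s) + H x (p s) + w x s - w' x s
      - ε ^ 4 * ∑ k, DD (DD W (ex k)) (ex k) (x, s)
  let ψ : ℝ → ℝ := fun s => ε * DD (DD W et) et (x, s)
      + (∑ k, DpH H x (p s) k * DD (DD W (ex k)) et (x, s))
      + DD W et (x, s) - DD W' et (x, s)
      - ε ^ 4 * ∑ k, DD (DD (DD W (ex k)) (ex k)) et (x, s)
  have hpcont : Continuous p := by
    apply continuous_pi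
    intro i
    exact ((DD.contDiff hw (ex i)).continuous).comp (continuous_const.prodMk continuous_id)
  have hψc : Continuous ψ := by
    have hsl : ∀ (F : ((Fin n → ℝ) × ℝ) → ℝ), ContDiff ℝ (⊤ : ℕ∞) F →
        Continuous (fun s => F (x, s)) := fun F hF =>
      hF.continuous.comp (continuous_const.prodMk continuous_id)
    have hDpH : ∀ k, Continuous (fun s => DpH H x (p s) k) := by
      intro k
      have : (fun s => DpH H x (p s) k)
          = fun s => fderiv ℝ (Function.uncurry H) (x, p s) (0, Pi.single k 1) :=
        funext fun s => DpH_eq hH x (p s) k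
      rw [this]
      exact ((hH.continuous_fderiv two_ne_zero).comp
        (continuous_const.prodMk hpcont)).clm_apply continuous_const
    refine ((((continuous_const.mul (hsl _ (DD.contDiff (DD.contDiff hw et) et))).add
      (continuous_finset_sum _ fun k _ => (hDpH k).mul
        (hsl _ (DD.contDiff (DD.contDiff hw (ex k)) et)))).add
      (hsl _ (DD.contDiff hw et))).sub (hsl _ (DD.contDiff hw' et))).sub
      (continuous_const.mul (continuous_finset_sum _ fun k _ =>
        hsl _ (DD.contDiff (DD.contDiff (DD.contDiff hw (ex k)) (ex k)) et)))
  have hd : ∀ s, HasDerivAt φ (ψ s) s := by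
    intro s
    have h1 : HasDerivAt (fun r => DD W et (x, r)) (DD (DD W et) et (x, s)) s :=
      hasDerivAt_sliceT ((DD.contDiff hw et).differentiable (by simp) (x, s))
    have hp : HasDerivAt p (fun i => DD (DD W (ex i)) et (x, s)) s :=
      hasDerivAt_pi.2 fun i =>
        hasDerivAt_sliceT ((DD.contDiff hw (ex i)).differentiable (by simp) (x, s))
    have h2' : HasDerivAt (fun r => H x (p r))
        (fderiv ℝ (fun q => H x q) (p s) (fun i => DD (DD W (ex i)) et (x, s))) s :=
      ((hHx.differentiable two_ne_zero (p s)).hasFDerivAt).comp_hasDerivAt s hp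
    have h2eq : fderiv ℝ (fun q => H x q) (p s) (fun i => DD (DD W (ex i)) et (x, s))
        = ∑ k, DpH H x (p s) k * DD (DD W (ex k)) et (x, s) := by
      rw [clm_apply_eq_sum]
      exact Finset.sum_congr rfl fun k _ => mul_comm _ _
    have h2 : HasDerivAt (fun r => H x (p r))
        (∑ k, DpH H x (p s) k * DD (DD W (ex k)) et (x, s)) s := h2eq ▸ h2'
    have h3 : HasDerivAt (fun r => w x r) (DD W et (x, s)) s :=
      hasDerivAt_sliceT (hw.differentiable (by simp) (x, s))
    have h4 : HasDerivAt (fun r => w' x r) (DD W' et (x, s)) s :=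
      hasDerivAt_sliceT (hw'.differentiable (by simp) (x, s))
    have h5 : HasDerivAt (fun r => ∑ k, DD (DD W (ex k)) (ex k) (x, r))
        (∑ k, DD (DD (DD W (ex k)) (ex k)) et (x, s)) s :=
      HasDerivAt.fun_sum fun k _ =>
        hasDerivAt_sliceT ((DD.contDiff (DD.contDiff hw (ex k)) (ex k)).differentiable
          (by simp) (x, s))
    exact ((((h1.const_mul ε).add h2).add h3).sub h4).sub (h5.const_mul (ε ^ 4))
  have h0 : ∀ t ∈ Set.Icc (0:ℝ) 1, φ t = 0 := by
    intro t ht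
    have h := hpde x t ht
    rw [derivT_eq hw x t, Dsp_eq hw x t, lapw_eq hw x t] at h
    show ε * DD W et (x, t) + H x (p t) + w x t - w' x t
      - ε ^ 4 * ∑ k, DD (DD W (ex k)) (ex k) (x, t) = 0
    linarith [h]
  intro t ht
  have hz := zero_deriv_of_zero_on_Icc φ ψ hψc hd h0 t ht
  have hz' : ε * DD (DD W et) et (x, t)
      + (∑ k, DpH H x (p t) k * DD (DD W (ex k)) et (x, t))
      + DD W et (x, t) - DD W' et (x, t)
      - ε ^ 4 * ∑ k, DD (DD (DD W (ex k)) (ex k)) et (x, t) = 0 := hz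
  rw [Dsp_eq hw x t]
  linarith [hz']

lemma pd_neg {f : (Fin n → ℝ) → ℝ} (i : Fin n) (x : Fin n → ℝ) :
    pd (fun y => -(f y)) i x = -(pd f i x) := by
  unfold pd; rw [fderiv_fun_neg]; rfl

lemma pd_add {f g : (Fin n → ℝ) → ℝ} {x : Fin n → ℝ} (hf : DifferentiableAt ℝ f x)
    (hg : DifferentiableAt ℝ g x) (i : Fin n) :
    pd (fun y => f y + g y) i x = pd f i x + pd g i x := by
  unfold pd; rw [fderiv_fun_add hf hg]; rfl

lemma pd_cmul {f : (Fin n → ℝ) → ℝ} {x : Fin n → ℝ} (c : ℝ)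
    (hf : DifferentiableAt ℝ f x) (i : Fin n) :
    pd (fun y => c * f y) i x = c * pd f i x := by
  unfold pd; rw [fderiv_const_mul hf]; rfl

lemma div_identity {H : (Fin n → ℝ) → (Fin n → ℝ) → ℝ}
    (hH : ContDiff ℝ 2 (Function.uncurry H)) (hHper : ∀ p, ZPer (fun x => H x p))
    {w σ : (Fin n → ℝ) → ℝ → ℝ}
    (hw : ContDiff ℝ (⊤ : ℕ∞) (fun q : (Fin n → ℝ) × ℝ => w q.1 q.2))
    (hwper : ∀ t, ZPer (fun y => w y t))
    (hσ : ContDiff ℝ (⊤ : ℕ∞) (fun q : (Fin n → ℝ) × ℝ => σ q.1 q.2))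
    (hσper : ∀ t, ZPer (fun y => σ y t))
    (ε s : ℝ) :
    ∃ V : Fin n → (Fin n → ℝ) → ℝ, (∀ k, ContDiff ℝ 1 (V k)) ∧ (∀ k, ZPer (V k)) ∧
      ∀ x, (∑ k, pd (V k) k x) =
        (∑ k, pd (fun y => DpH H y (Dsp w y s) k * σ y s) k x)
            * (-(DD (fun q : (Fin n → ℝ) × ℝ => w q.1 q.2) et (x, s)))
          + (∑ k, DpH H x (Dsp w x s) k *
              DD (DD (fun q : (Fin n → ℝ) × ℝ => w q.1 q.2) (ex k)) et (x, s)) * (-(σ x s))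
          + (∑ k, DD (DD (DD (fun q : (Fin n → ℝ) × ℝ => w q.1 q.2) (ex k)) (ex k)) et (x, s))
              * (ε ^ 4 * σ x s)
          + (∑ k, DD (DD (fun q : (Fin n → ℝ) × ℝ => σ q.1 q.2) (ex k)) (ex k) (x, s))
              * (-(ε ^ 4 * DD (fun q : (Fin n → ℝ) × ℝ => w q.1 q.2) et (x, s))) := by
  refine ⟨fun k y =>
      (DpH H y (Dsp w y s) k * σ y s)
          * (-(DD (fun q : (Fin n → ℝ) × ℝ => w q.1 q.2) et (y, s)))
        + DD (DD (fun q : (Fin n → ℝ) × ℝ => w q.1 q.2) et) (ex k) (y, s) * (ε ^ 4 * σ y s)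
        + DD (fun q : (Fin n → ℝ) × ℝ => σ q.1 q.2) (ex k) (y, s)
            * (-(ε ^ 4 * DD (fun q : (Fin n → ℝ) × ℝ => w q.1 q.2) et (y, s))), ?_, ?_, ?_⟩
  -- some common facts
  case _ => -- smoothness
    intro k
    have hDspfun : (fun y => Dsp w y s)
        = fun y => (fun i => DD (fun q : (Fin n → ℝ) × ℝ => w q.1 q.2) (ex i) (y, s)) :=
      funext fun y => Dsp_eq hw y s
    have hDsp1 : ContDiff ℝ 1 (fun y => Dsp w y s) := by
      rw [hDspfun]
      exact contDiff_pi.2 fun i =>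
        ((contDiff_sliceX (DD.contDiff hw (ex i)) s).of_le (by simp))
    have hDpHfun : (fun y => DpH H y (Dsp w y s) k)
        = fun y => fderiv ℝ (Function.uncurry H) (y, Dsp w y s) (0, Pi.single k 1) :=
      funext fun y => DpH_eq hH y _ k
    have hDpH : ContDiff ℝ 1 (fun y => DpH H y (Dsp w y s) k) := by
      rw [hDpHfun]
      exact ((hH.fderiv_right (by norm_num)).comp
        (contDiff_id.prodMk hDsp1)).clm_apply contDiff_const
    have hσs : ContDiff ℝ 1 (fun y => σ y s) :=
      (contDiff_sliceX hσ s).of_le (by simp)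
    have hc : ContDiff ℝ 1
        (fun y => DD (fun q : (Fin n → ℝ) × ℝ => w q.1 q.2) et (y, s)) :=
      (contDiff_sliceX (DD.contDiff hw et) s).of_le (by simp)
    have hc2 : ContDiff ℝ 1
        (fun y => DD (DD (fun q : (Fin n → ℝ) × ℝ => w q.1 q.2) et) (ex k) (y, s)) :=
      (contDiff_sliceX (DD.contDiff (DD.contDiff hw et) (ex k)) s).of_le (by simp)
    have hS : ContDiff ℝ 1
        (fun y => DD (fun q : (Fin n → ℝ) × ℝ => σ q.1 q.2) (ex k) (y, s)) :=
      (contDiff_sliceX (DD.contDiff hσ (ex k)) s).of_le (by simp)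
    exact (((hDpH.mul hσs).mul hc.neg).add
      (hc2.mul (contDiff_const.mul hσs))).add (hS.mul (contDiff_const.mul hc).neg)
  case _ => -- periodicity
    intro k y κ
    have hWper : ZPerP (fun q : (Fin n → ℝ) × ℝ => w q.1 q.2) := ZPerP_of_per hwper
    have hSper : ZPerP (fun q : (Fin n → ℝ) × ℝ => σ q.1 q.2) := ZPerP_of_per hσper
    have ec : DD (fun q : (Fin n → ℝ) × ℝ => w q.1 q.2) et
        ((y + fun i => (κ i : ℝ)), s)
        = DD (fun q : (Fin n → ℝ) × ℝ => w q.1 q.2) et (y, s) := (hWper.dd hw et) y s κ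
    have ec2 : DD (DD (fun q : (Fin n → ℝ) × ℝ => w q.1 q.2) et) (ex k)
        ((y + fun i => (κ i : ℝ)), s)
        = DD (DD (fun q : (Fin n → ℝ) × ℝ => w q.1 q.2) et) (ex k) (y, s) :=
      ((hWper.dd hw et).dd (DD.contDiff hw et) (ex k)) y s κ
    have eS : DD (fun q : (Fin n → ℝ) × ℝ => σ q.1 q.2) (ex k)
        ((y + fun i => (κ i : ℝ)), s)
        = DD (fun q : (Fin n → ℝ) × ℝ => σ q.1 q.2) (ex k) (y, s) := (hSper.dd hσ (ex k)) y s κ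
    have eσ : σ (y + fun i => (κ i : ℝ)) s = σ y s := hσper s y κ
    have edsp : Dsp w (y + fun i => (κ i : ℝ)) s = Dsp w y s := by
      rw [Dsp_eq hw, Dsp_eq hw]
      funext i
      exact (hWper.dd hw (ex i)) y s κ
    have ea : DpH H (y + fun i => (κ i : ℝ)) (Dsp w (y + fun i => (κ i : ℝ)) s) k
        = DpH H y (Dsp w y s) k := by
      rw [edsp]
      exact DpH_translate hHper y _ κ k
    simp only [ea, eσ, ec, ec2, eS]
  case _ => -- the sum formula
    intro x
    -- differentiability facts at x
    have hDspfun : (fun y => Dsp w y s)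
        = fun y => (fun i => DD (fun q : (Fin n → ℝ) × ℝ => w q.1 q.2) (ex i) (y, s)) :=
      funext fun y => Dsp_eq hw y s
    have hDsp1 : ContDiff ℝ 1 (fun y => Dsp w y s) := by
      rw [hDspfun]
      exact contDiff_pi.2 fun i =>
        ((contDiff_sliceX (DD.contDiff hw (ex i)) s).of_le (by simp))
    have hDpHfun : ∀ k, (fun y => DpH H y (Dsp w y s) k)
        = fun y => fderiv ℝ (Function.uncurry H) (y, Dsp w y s) (0, Pi.single k 1) :=
      fun k => funext fun y => DpH_eq hH y _ k
    have hDpH : ∀ k, ContDiff ℝ 1 (fun y => DpH H y (Dsp w y s) k) := by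
      intro k
      rw [hDpHfun k]
      exact ((hH.fderiv_right (by norm_num)).comp
        (contDiff_id.prodMk hDsp1)).clm_apply contDiff_const
    have hσs : ContDiff ℝ 1 (fun y => σ y s) :=
      (contDiff_sliceX hσ s).of_le (by simp)
    have hA : ∀ k, DifferentiableAt ℝ (fun y => DpH H y (Dsp w y s) k * σ y s) x :=
      fun k => (((hDpH k).mul hσs).differentiable one_ne_zero) x
    have hcD : DifferentiableAt ℝ
        (fun y => DD (fun q : (Fin n → ℝ) × ℝ => w q.1 q.2) et (y, s)) x :=
      ((contDiff_sliceX (DD.contDiff hw et) s).differentiable (by simp)) x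
    have hc2D : ∀ k, DifferentiableAt ℝ
        (fun y => DD (DD (fun q : (Fin n → ℝ) × ℝ => w q.1 q.2) et) (ex k) (y, s)) x :=
      fun k => ((contDiff_sliceX (DD.contDiff (DD.contDiff hw et) (ex k)) s).differentiable
        (by simp)) x
    have hSD : ∀ k, DifferentiableAt ℝ
        (fun y => DD (fun q : (Fin n → ℝ) × ℝ => σ q.1 q.2) (ex k) (y, s)) x :=
      fun k => ((contDiff_sliceX (DD.contDiff hσ (ex k)) s).differentiable (by simp)) x
    have hσD : DifferentiableAt ℝ (fun y => σ y s) x := (hσs.differentiable one_ne_zero) x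
    have hVk : ∀ k : Fin n,
        pd (fun y =>
          (DpH H y (Dsp w y s) k * σ y s)
              * (-(DD (fun q : (Fin n → ℝ) × ℝ => w q.1 q.2) et (y, s)))
            + DD (DD (fun q : (Fin n → ℝ) × ℝ => w q.1 q.2) et) (ex k) (y, s)
                * (ε ^ 4 * σ y s)
            + DD (fun q : (Fin n → ℝ) × ℝ => σ q.1 q.2) (ex k) (y, s)
                * (-(ε ^ 4 * DD (fun q : (Fin n → ℝ) × ℝ => w q.1 q.2) et (y, s)))) k x
        = pd (fun y => DpH H y (Dsp w y s) k * σ y s) k x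
            * (-(DD (fun q : (Fin n → ℝ) × ℝ => w q.1 q.2) et (x, s)))
          + (DpH H x (Dsp w x s) k *
              DD (DD (fun q : (Fin n → ℝ) × ℝ => w q.1 q.2) (ex k)) et (x, s)) * (-(σ x s))
          + DD (DD (DD (fun q : (Fin n → ℝ) × ℝ => w q.1 q.2) (ex k)) (ex k)) et (x, s)
              * (ε ^ 4 * σ x s)
          + DD (DD (fun q : (Fin n → ℝ) × ℝ => σ q.1 q.2) (ex k)) (ex k) (x, s)
              * (-(ε ^ 4 * DD (fun q : (Fin n → ℝ) × ℝ => w q.1 q.2) et (x, s))) := by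
      intro k
      rw [pd_add (((hA k).fun_mul hcD.fun_neg).fun_add ((hc2D k).fun_mul ((differentiableAt_const _).fun_mul hσD)))
            (((hSD k).fun_mul ((differentiableAt_const _).fun_mul hcD).fun_neg)) k,
          pd_add ((hA k).fun_mul hcD.fun_neg) ((hc2D k).fun_mul ((differentiableAt_const _).fun_mul hσD)) k,
          pd_mul (hA k) hcD.fun_neg k, pd_mul (hc2D k) ((differentiableAt_const _).fun_mul hσD) k,
          pd_mul (hSD k) ((differentiableAt_const _).fun_mul hcD).fun_neg k,
          pd_neg, pd_neg, pd_cmul _ hσD k, pd_cmul _ hcD k]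
      rw [pd_slice (DD.contDiff hw et) k x s,
          pd_slice (DD.contDiff (DD.contDiff hw et) (ex k)) k x s,
          pd_slice (DD.contDiff hσ (ex k)) k x s,
          pdw_eq hσ k x s]
      rw [DD.comm hw et (ex k), DD.comm (DD.contDiff hw (ex k)) et (ex k)]
      ring
    calc (∑ k, pd (fun y =>
          (DpH H y (Dsp w y s) k * σ y s)
              * (-(DD (fun q : (Fin n → ℝ) × ℝ => w q.1 q.2) et (y, s)))
            + DD (DD (fun q : (Fin n → ℝ) × ℝ => w q.1 q.2) et) (ex k) (y, s)
                * (ε ^ 4 * σ y s)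
            + DD (fun q : (Fin n → ℝ) × ℝ => σ q.1 q.2) (ex k) (y, s)
                * (-(ε ^ 4 * DD (fun q : (Fin n → ℝ) × ℝ => w q.1 q.2) et (y, s)))) k x)
        = ∑ k, (pd (fun y => DpH H y (Dsp w y s) k * σ y s) k x
            * (-(DD (fun q : (Fin n → ℝ) × ℝ => w q.1 q.2) et (x, s)))
          + (DpH H x (Dsp w x s) k *
              DD (DD (fun q : (Fin n → ℝ) × ℝ => w q.1 q.2) (ex k)) et (x, s)) * (-(σ x s))
          + DD (DD (DD (fun q : (Fin n → ℝ) × ℝ => w q.1 q.2) (ex k)) (ex k)) et (x, s)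
              * (ε ^ 4 * σ x s)
          + DD (DD (fun q : (Fin n → ℝ) × ℝ => σ q.1 q.2) (ex k)) (ex k) (x, s)
              * (-(ε ^ 4 * DD (fun q : (Fin n → ℝ) × ℝ => w q.1 q.2) et (x, s)))) :=
        Finset.sum_congr rfl fun k _ => hVk k
      _ = _ := by
        simp only [Finset.sum_add_distrib, ← Finset.sum_mul]

theorem stmt_17 {n : ℕ} (H₁ H₂ : (Fin n → ℝ) → (Fin n → ℝ) → ℝ)
    (hH₁ : ContDiff ℝ 2 (Function.uncurry H₁))
    (hH₂ : ContDiff ℝ 2 (Function.uncurry H₂))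
    (hH₁per : ∀ p, ZPer (fun x => H₁ x p))
    (hH₂per : ∀ p, ZPer (fun x => H₂ x p))
    (ε : ℝ) (hε : 0 < ε)
    (w₁ w₂ : (Fin n → ℝ) → ℝ → ℝ)
    (hw₁ : ContDiff ℝ (⊤ : ℕ∞) (fun q : (Fin n → ℝ) × ℝ => w₁ q.1 q.2))
    (hw₂ : ContDiff ℝ (⊤ : ℕ∞) (fun q : (Fin n → ℝ) × ℝ => w₂ q.1 q.2))
    (hw₁per : ∀ t : ℝ, ZPer (fun y => w₁ y t))
    (hw₂per : ∀ t : ℝ, ZPer (fun y => w₂ y t))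
    (hpde₁ : ∀ (x : Fin n → ℝ), ∀ t ∈ Set.Icc (0:ℝ) 1,
      ε * deriv (w₁ x) t + H₁ x (Dsp w₁ x t) + w₁ x t - w₂ x t
        = ε ^ 4 * lap (fun y => w₁ y t) x)
    (hpde₂ : ∀ (x : Fin n → ℝ), ∀ t ∈ Set.Icc (0:ℝ) 1,
      ε * deriv (w₂ x) t + H₂ x (Dsp w₂ x t) + w₂ x t - w₁ x t
        = ε ^ 4 * lap (fun y => w₂ y t) x)
    (σ₁ σ₂ : (Fin n → ℝ) → ℝ → ℝ)
    (hσ₁ : ContDiff ℝ (⊤ : ℕ∞) (fun q : (Fin n → ℝ) × ℝ => σ₁ q.1 q.2))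
    (hσ₂ : ContDiff ℝ (⊤ : ℕ∞) (fun q : (Fin n → ℝ) × ℝ => σ₂ q.1 q.2))
    (hσ₁per : ∀ t : ℝ, ZPer (fun y => σ₁ y t))
    (hσ₂per : ∀ t : ℝ, ZPer (fun y => σ₂ y t))
    (hadj₁ : ∀ (x : Fin n → ℝ), ∀ t ∈ Set.Icc (0:ℝ) 1,
      -(ε * deriv (σ₁ x) t) - (∑ i, pd (fun y => DpH H₁ y (Dsp w₁ y t) i * σ₁ y t) i x)
        + σ₁ x t - σ₂ x t = ε ^ 4 * lap (fun y => σ₁ y t) x)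
    (hadj₂ : ∀ (x : Fin n → ℝ), ∀ t ∈ Set.Icc (0:ℝ) 1,
      -(ε * deriv (σ₂ x) t) - (∑ i, pd (fun y => DpH H₂ y (Dsp w₂ y t) i * σ₂ y t) i x)
        + σ₂ x t - σ₁ x t = ε ^ 4 * lap (fun y => σ₂ y t) x) :
    ∀ t₁ ∈ Set.Icc (0:ℝ) 1, ∀ t₂ ∈ Set.Icc (0:ℝ) 1,
      (∫ x in cube n,
          ((H₁ x (Dsp w₁ x t₁) + w₁ x t₁ - w₂ x t₁
              - ε ^ 4 * lap (fun y => w₁ y t₁) x) * σ₁ x t₁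
            + (H₂ x (Dsp w₂ x t₁) + w₂ x t₁ - w₁ x t₁
              - ε ^ 4 * lap (fun y => w₂ y t₁) x) * σ₂ x t₁))
        = ∫ x in cube n,
            ((H₁ x (Dsp w₁ x t₂) + w₁ x t₂ - w₂ x t₂
                - ε ^ 4 * lap (fun y => w₁ y t₂) x) * σ₁ x t₂
              + (H₂ x (Dsp w₂ x t₂) + w₂ x t₂ - w₁ x t₂
                - ε ^ 4 * lap (fun y => w₂ y t₂) x) * σ₂ x t₂) := by
  intro t₁ ht₁ t₂ ht₂
  have hEG : ∀ t ∈ Set.Icc (0:ℝ) 1, ∀ x : Fin n → ℝ,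
      ((H₁ x (Dsp w₁ x t) + w₁ x t - w₂ x t - ε ^ 4 * lap (fun y => w₁ y t) x) * σ₁ x t
        + (H₂ x (Dsp w₂ x t) + w₂ x t - w₁ x t - ε ^ 4 * lap (fun y => w₂ y t) x) * σ₂ x t)
      = -(ε * (DD (fun q : (Fin n → ℝ) × ℝ => w₁ q.1 q.2) et (x, t) * σ₁ x t + DD (fun q : (Fin n → ℝ) × ℝ => w₂ q.1 q.2) et (x, t) * σ₂ x t)) := by
    intro t ht x
    have h1 := hpde₁ x t ht
    have h2 := hpde₂ x t ht
    rw [derivT_eq hw₁ x t] at h1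
    rw [derivT_eq hw₂ x t] at h2
    have hb1 : H₁ x (Dsp w₁ x t) + w₁ x t - w₂ x t - ε ^ 4 * lap (fun y => w₁ y t) x
        = -(ε * DD (fun q : (Fin n → ℝ) × ℝ => w₁ q.1 q.2) et (x, t)) := by linarith
    have hb2 : H₂ x (Dsp w₂ x t) + w₂ x t - w₁ x t - ε ^ 4 * lap (fun y => w₂ y t) x
        = -(ε * DD (fun q : (Fin n → ℝ) × ℝ => w₂ q.1 q.2) et (x, t)) := by linarith
    rw [hb1, hb2]; ring
  have hgderiv : ∀ (x : Fin n → ℝ) (s : ℝ),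
      HasDerivAt (fun r => -(ε * (DD (fun q : (Fin n → ℝ) × ℝ => w₁ q.1 q.2) et (x, r) * σ₁ x r + DD (fun q : (Fin n → ℝ) × ℝ => w₂ q.1 q.2) et (x, r) * σ₂ x r))) (-(ε * ((DD (DD (fun q : (Fin n → ℝ) × ℝ => w₁ q.1 q.2) et) et (x, s) * σ₁ x s + DD (fun q : (Fin n → ℝ) × ℝ => w₁ q.1 q.2) et (x, s) * DD (fun q : (Fin n → ℝ) × ℝ => σ₁ q.1 q.2) et (x, s)) + (DD (DD (fun q : (Fin n → ℝ) × ℝ => w₂ q.1 q.2) et) et (x, s) * σ₂ x s + DD (fun q : (Fin n → ℝ) × ℝ => w₂ q.1 q.2) et (x, s) * DD (fun q : (Fin n → ℝ) × ℝ => σ₂ q.1 q.2) et (x, s))))) s := by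
    intro x s
    have h1 : HasDerivAt (fun r => DD (fun q : (Fin n → ℝ) × ℝ => w₁ q.1 q.2) et (x, r)) (DD (DD (fun q : (Fin n → ℝ) × ℝ => w₁ q.1 q.2) et) et (x, s)) s :=
      hasDerivAt_sliceT ((DD.contDiff hw₁ et).differentiable (by simp) (x, s))
    have h2 : HasDerivAt (fun r => σ₁ x r) (DD (fun q : (Fin n → ℝ) × ℝ => σ₁ q.1 q.2) et (x, s)) s :=
      hasDerivAt_sliceT (hσ₁.differentiable (by simp) (x, s))
    have h3 : HasDerivAt (fun r => DD (fun q : (Fin n → ℝ) × ℝ => w₂ q.1 q.2) et (x, r)) (DD (DD (fun q : (Fin n → ℝ) × ℝ => w₂ q.1 q.2) et) et (x, s)) s :=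
      hasDerivAt_sliceT ((DD.contDiff hw₂ et).differentiable (by simp) (x, s))
    have h4 : HasDerivAt (fun r => σ₂ x r) (DD (fun q : (Fin n → ℝ) × ℝ => σ₂ q.1 q.2) et (x, s)) s :=
      hasDerivAt_sliceT (hσ₂.differentiable (by simp) (x, s))
    exact (((h1.mul h2).add (h3.mul h4)).const_mul ε).neg
  have hzero : ∀ s ∈ Set.Icc (0:ℝ) 1, (∫ x in cube n, -(ε * ((DD (DD (fun q : (Fin n → ℝ) × ℝ => w₁ q.1 q.2) et) et (x, s) * σ₁ x s + DD (fun q : (Fin n → ℝ) × ℝ => w₁ q.1 q.2) et (x, s) * DD (fun q : (Fin n → ℝ) × ℝ => σ₁ q.1 q.2) et (x, s)) + (DD (DD (fun q : (Fin n → ℝ) × ℝ => w₂ q.1 q.2) et) et (x, s) * σ₂ x s + DD (fun q : (Fin n → ℝ) × ℝ => w₂ q.1 q.2) et (x, s) * DD (fun q : (Fin n → ℝ) × ℝ => σ₂ q.1 q.2) et (x, s))))) = 0 := by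
    intro s hs
    obtain ⟨V₁, hV₁s, hV₁p, hV₁f⟩ := div_identity hH₁ hH₁per hw₁ hw₁per hσ₁ hσ₁per ε s
    obtain ⟨V₂, hV₂s, hV₂p, hV₂f⟩ := div_identity hH₂ hH₂per hw₂ hw₂per hσ₂ hσ₂per ε s
    have hpt : ∀ x : Fin n → ℝ,
        -(ε * ((DD (DD (fun q : (Fin n → ℝ) × ℝ => w₁ q.1 q.2) et) et (x, s) * σ₁ x s + DD (fun q : (Fin n → ℝ) × ℝ => w₁ q.1 q.2) et (x, s) * DD (fun q : (Fin n → ℝ) × ℝ => σ₁ q.1 q.2) et (x, s)) + (DD (DD (fun q : (Fin n → ℝ) × ℝ => w₂ q.1 q.2) et) et (x, s) * σ₂ x s + DD (fun q : (Fin n → ℝ) × ℝ => w₂ q.1 q.2) et (x, s) * DD (fun q : (Fin n → ℝ) × ℝ => σ₂ q.1 q.2) et (x, s)))) = -((∑ k, pd (V₁ k) k x) + (∑ k, pd (V₂ k) k x)) := by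
      intro x
      have E1 := derived_pde hH₁ hw₁ hw₂ ε hpde₁ x s hs
      have E1' := derived_pde hH₂ hw₂ hw₁ ε hpde₂ x s hs
      have E2 := hadj₁ x s hs
      have E2' := hadj₂ x s hs
      rw [derivT_eq hσ₁ x s, lapw_eq hσ₁ x s] at E2
      rw [derivT_eq hσ₂ x s, lapw_eq hσ₂ x s] at E2'
      rw [hV₁f x, hV₂f x]
      linear_combination (-(σ₁ x s)) * E1 + (DD (fun q : (Fin n → ℝ) × ℝ => w₁ q.1 q.2) et (x, s)) * E2
        + (-(σ₂ x s)) * E1' + (DD (fun q : (Fin n → ℝ) × ℝ => w₂ q.1 q.2) et (x, s)) * E2'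
    have hcont : ∀ (V : Fin n → (Fin n → ℝ) → ℝ), (∀ k, ContDiff ℝ 1 (V k)) →
        IntegrableOn (fun x => ∑ k, pd (V k) k x) (cube n) volume := by
      intro V hV
      apply ContinuousOn.integrableOn_compact isCompact_Icc
      exact (continuous_finset_sum _ fun k _ =>
        ((hV k).continuous_fderiv one_ne_zero).clm_apply continuous_const).continuousOn
    calc (∫ x in cube n, -(ε * ((DD (DD (fun q : (Fin n → ℝ) × ℝ => w₁ q.1 q.2) et) et (x, s) * σ₁ x s + DD (fun q : (Fin n → ℝ) × ℝ => w₁ q.1 q.2) et (x, s) * DD (fun q : (Fin n → ℝ) × ℝ => σ₁ q.1 q.2) et (x, s)) + (DD (DD (fun q : (Fin n → ℝ) × ℝ => w₂ q.1 q.2) et) et (x, s) * σ₂ x s + DD (fun q : (Fin n → ℝ) × ℝ => w₂ q.1 q.2) et (x, s) * DD (fun q : (Fin n → ℝ) × ℝ => σ₂ q.1 q.2) et (x, s)))))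
        = ∫ x in cube n, -((∑ k, pd (V₁ k) k x) + (∑ k, pd (V₂ k) k x)) :=
          setIntegral_congr_fun measurableSet_Icc (fun x _ => hpt x)
      _ = -((∫ x in cube n, ∑ k, pd (V₁ k) k x) + (∫ x in cube n, ∑ k, pd (V₂ k) k x)) := by
          rw [integral_neg, integral_add (hcont V₁ hV₁s) (hcont V₂ hV₂s)]
      _ = 0 := by
          rw [integral_div_zero V₁ hV₁s hV₁p, integral_div_zero V₂ hV₂s hV₂p]; ring
  have hGTc : Continuous (fun z : (Fin n → ℝ) × ℝ =>
      -(ε * ((DD (DD (fun q : (Fin n → ℝ) × ℝ => w₁ q.1 q.2) et) et z * σ₁ z.1 z.2 + DD (fun q : (Fin n → ℝ) × ℝ => w₁ q.1 q.2) et z * DD (fun q : (Fin n → ℝ) × ℝ => σ₁ q.1 q.2) et z)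
        + (DD (DD (fun q : (Fin n → ℝ) × ℝ => w₂ q.1 q.2) et) et z * σ₂ z.1 z.2 + DD (fun q : (Fin n → ℝ) × ℝ => w₂ q.1 q.2) et z * DD (fun q : (Fin n → ℝ) × ℝ => σ₂ q.1 q.2) et z)))) := by
    exact ((continuous_const.mul
      ((((DD.contDiff (DD.contDiff hw₁ et) et).continuous.mul hσ₁.continuous).add
        ((DD.contDiff hw₁ et).continuous.mul (DD.contDiff hσ₁ et).continuous)).add
       (((DD.contDiff (DD.contDiff hw₂ et) et).continuous.mul hσ₂.continuous).add
        ((DD.contDiff hw₂ et).continuous.mul (DD.contDiff hσ₂ et).continuous)))).neg)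
  have hGc : ∀ t : ℝ, Continuous (fun x : Fin n → ℝ => -(ε * (DD (fun q : (Fin n → ℝ) × ℝ => w₁ q.1 q.2) et (x, t) * σ₁ x t + DD (fun q : (Fin n → ℝ) × ℝ => w₂ q.1 q.2) et (x, t) * σ₂ x t))) := by
    intro t
    have hs1 : Continuous (fun x : Fin n → ℝ => σ₁ x t) :=
      hσ₁.continuous.comp (continuous_id.prodMk continuous_const)
    have hs2 : Continuous (fun x : Fin n → ℝ => σ₂ x t) :=
      hσ₂.continuous.comp (continuous_id.prodMk continuous_const)
    have hc1 : Continuous (fun x : Fin n → ℝ => DD (fun q : (Fin n → ℝ) × ℝ => w₁ q.1 q.2) et (x, t)) :=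
      (DD.contDiff hw₁ et).continuous.comp (continuous_id.prodMk continuous_const)
    have hc2 : Continuous (fun x : Fin n → ℝ => DD (fun q : (Fin n → ℝ) × ℝ => w₂ q.1 q.2) et (x, t)) :=
      (DD.contDiff hw₂ et).continuous.comp (continuous_id.prodMk continuous_const)
    exact (continuous_const.mul ((hc1.mul hs1).add (hc2.mul hs2))).neg
  have key : ∀ a, a ∈ Set.Icc (0:ℝ) 1 → ∀ b, b ∈ Set.Icc (0:ℝ) 1 → a ≤ b →
      (∫ x in cube n, -(ε * (DD (fun q : (Fin n → ℝ) × ℝ => w₁ q.1 q.2) et (x, a) * σ₁ x a + DD (fun q : (Fin n → ℝ) × ℝ => w₂ q.1 q.2) et (x, a) * σ₂ x a))) = ∫ x in cube n, -(ε * (DD (fun q : (Fin n → ℝ) × ℝ => w₁ q.1 q.2) et (x, b) * σ₁ x b + DD (fun q : (Fin n → ℝ) × ℝ => w₂ q.1 q.2) et (x, b) * σ₂ x b)) := by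
    intro a ha b hb hab
    have hint : ∀ t : ℝ, IntegrableOn (fun x : Fin n → ℝ => -(ε * (DD (fun q : (Fin n → ℝ) × ℝ => w₁ q.1 q.2) et (x, t) * σ₁ x t + DD (fun q : (Fin n → ℝ) × ℝ => w₂ q.1 q.2) et (x, t) * σ₂ x t))) (cube n) volume := by
      intro t
      apply ContinuousOn.integrableOn_compact isCompact_Icc
      exact (hGc t).continuousOn
    have hftc : ∀ x : Fin n → ℝ, -(ε * (DD (fun q : (Fin n → ℝ) × ℝ => w₁ q.1 q.2) et (x, b) * σ₁ x b + DD (fun q : (Fin n → ℝ) × ℝ => w₂ q.1 q.2) et (x, b) * σ₂ x b)) - -(ε * (DD (fun q : (Fin n → ℝ) × ℝ => w₁ q.1 q.2) et (x, a) * σ₁ x a + DD (fun q : (Fin n → ℝ) × ℝ => w₂ q.1 q.2) et (x, a) * σ₂ x a)) = ∫ s in Set.Ioc a b, -(ε * ((DD (DD (fun q : (Fin n → ℝ) × ℝ => w₁ q.1 q.2) et) et (x, s) * σ₁ x s + DD (fun q : (Fin n → ℝ) × ℝ => w₁ q.1 q.2) et (x, s) * DD (fun q : (Fin n → ℝ)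 × ℝ => σ₁ q.1 q.2) et (x, s)) + (DD (DD (fun q : (Fin n → ℝ) × ℝ => w₂ q.1 q.2) et) et (x, s) * σ₂ x s + DD (fun q : (Fin n → ℝ) × ℝ => w₂ q.1 q.2) et (x, s) * DD (fun q : (Fin n → ℝ) × ℝ => σ₂ q.1 q.2) et (x, s)))) := by
      intro x
      have hii : IntervalIntegrable (fun s => -(ε * ((DD (DD (fun q : (Fin n → ℝ) × ℝ => w₁ q.1 q.2) et) et (x, s) * σ₁ x s + DD (fun q : (Fin n → ℝ) × ℝ => w₁ q.1 q.2) et (x, s) * DD (fun q : (Fin n → ℝ) × ℝ => σ₁ q.1 q.2) et (x, s)) + (DD (DD (fun q : (Fin n → ℝ) × ℝ => w₂ q.1 q.2) et) et (x, s) * σ₂ x s + DD (fun q : (Fin n → ℝ) × ℝ => w₂ q.1 q.2) et (x, s) * DD (fun q : (Fin n → ℝ) × ℝ => σ₂ q.1 q.2) et (x, s))))) volume a b := by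
        apply Continuous.intervalIntegrable
        exact hGTc.comp (continuous_const.prodMk continuous_id)
      have h := intervalIntegral.integral_eq_sub_of_hasDerivAt
        (f := fun r => -(ε * (DD (fun q : (Fin n → ℝ) × ℝ => w₁ q.1 q.2) et (x, r) * σ₁ x r + DD (fun q : (Fin n → ℝ) × ℝ => w₂ q.1 q.2) et (x, r) * σ₂ x r))) (fun s _ => hgderiv x s) hii
      rw [intervalIntegral.integral_of_le hab] at h
      exact h.symm
    have hinteg : IntegrableOn (Function.uncurry (fun (x : Fin n → ℝ) (s : ℝ) => -(ε * ((DD (DD (fun q : (Fin n → ℝ) × ℝ => w₁ q.1 q.2) et) et (x, s) * σ₁ x s + DD (fun q : (Fin n → ℝ) × ℝ => w₁ q.1 q.2) et (x, s) * DD (fun q : (Fin n → ℝ) × ℝ => σ₁ q.1 q.2) et (x, s)) + (DD (DD (fun q : (Fin n → ℝ) × ℝ => w₂ q.1 q.2) et) et (x, s) * σ₂ x s + DD (fun q : (Fin n → ℝ) × ℝ => w₂ q.1 q.2) et (x, s) * DD (fun q : (Fin n → ℝ) × ℝ => σ₂ q.1 q.2) et (x, s))))))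
        ((cube n) ×ˢ (Set.Ioc a b)) volume := by
      apply IntegrableOn.mono_set
        (t := (cube n) ×ˢ (Set.Icc a b)) _ (Set.prod_mono subset_rfl Set.Ioc_subset_Icc_self)
      apply ContinuousOn.integrableOn_compact (isCompact_Icc.prod isCompact_Icc)
      exact hGTc.continuousOn
    have hsub : (∫ x in cube n, -(ε * (DD (fun q : (Fin n → ℝ) × ℝ => w₁ q.1 q.2) et (x, b) * σ₁ x b + DD (fun q : (Fin n → ℝ) × ℝ => w₂ q.1 q.2) et (x, b) * σ₂ x b))) - (∫ x in cube n, -(ε * (DD (fun q : (Fin n → ℝ) × ℝ => w₁ q.1 q.2) et (x, a) * σ₁ x a + DD (fun q : (Fin n → ℝ) × ℝ => w₂ q.1 q.2) et (x, a) * σ₂ x a))) = 0 := by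
      rw [← integral_sub (hint b) (hint a)]
      calc (∫ x in cube n, (-(ε * (DD (fun q : (Fin n → ℝ) × ℝ => w₁ q.1 q.2) et (x, b) * σ₁ x b + DD (fun q : (Fin n → ℝ) × ℝ => w₂ q.1 q.2) et (x, b) * σ₂ x b)) - -(ε * (DD (fun q : (Fin n → ℝ) × ℝ => w₁ q.1 q.2) et (x, a) * σ₁ x a + DD (fun q : (Fin n → ℝ) × ℝ => w₂ q.1 q.2) et (x, a) * σ₂ x a))))
          = ∫ x in cube n, ∫ s in Set.Ioc a b, -(ε * ((DD (DD (fun q : (Fin n → ℝ) × ℝ => w₁ q.1 q.2) et) et (x, s) * σ₁ x s + DD (fun q : (Fin n → ℝ) × ℝ => w₁ q.1 q.2) et (x, s) * DD (fun q : (Fin n → ℝ) × ℝ => σ₁ q.1 q.2) et (x, s)) + (DD (DD (fun q : (Fin n → ℝ) × ℝ => w₂ q.1 q.2) et) et (x, s) * σ₂ x s + DD (fun q : (Fin n → ℝ) × ℝ => w₂ q.1 q.2) et (x, s) * DD (fun q : (Fin n → ℝ) × ℝ => σ₂ q.1 q.2) et (x, s)))) :=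
            setIntegral_congr_fun measurableSet_Icc (fun x _ => hftc x)
        _ = ∫ s in Set.Ioc a b, ∫ x in cube n, -(ε * ((DD (DD (fun q : (Fin n → ℝ) × ℝ => w₁ q.1 q.2) et) et (x, s) * σ₁ x s + DD (fun q : (Fin n → ℝ) × ℝ => w₁ q.1 q.2) et (x, s) * DD (fun q : (Fin n → ℝ) × ℝ => σ₁ q.1 q.2) et (x, s)) + (DD (DD (fun q : (Fin n → ℝ) × ℝ => w₂ q.1 q.2) et) et (x, s) * σ₂ x s + DD (fun q : (Fin n → ℝ) × ℝ => w₂ q.1 q.2) et (x, s) * DD (fun q : (Fin n → ℝ) × ℝ => σ₂ q.1 q.2) et (x, s)))) := by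
            apply MeasureTheory.integral_integral_swap
            rw [Measure.prod_restrict]
            exact hinteg
        _ = ∫ s in Set.Ioc a b, (0:ℝ) :=
            setIntegral_congr_fun measurableSet_Ioc
              (fun s hsI => hzero s ⟨ha.1.trans hsI.1.le, hsI.2.trans hb.2⟩)
        _ = 0 := by simp
    linarith
  have hre : ∀ t ∈ Set.Icc (0:ℝ) 1,
      (∫ x in cube n,
        ((H₁ x (Dsp w₁ x t) + w₁ x t - w₂ x t - ε ^ 4 * lap (fun y => w₁ y t) x) * σ₁ x t
          + (H₂ x (Dsp w₂ x t) + w₂ x t - w₁ x t - ε ^ 4 * lap (fun y => w₂ y t) x) * σ₂ x t))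
      = ∫ x in cube n, -(ε * (DD (fun q : (Fin n → ℝ) × ℝ => w₁ q.1 q.2) et (x, t) * σ₁ x t + DD (fun q : (Fin n → ℝ) × ℝ => w₂ q.1 q.2) et (x, t) * σ₂ x t)) := fun t ht =>
    setIntegral_congr_fun measurableSet_Icc (fun x _ => hEG t ht x)
  rw [hre t₁ ht₁, hre t₂ ht₂]
  rcases le_total t₁ t₂ with h | h
  · exact key t₁ ht₁ t₂ ht₂ h
  · exact (key t₂ ht₂ t₁ ht₁ h).symm


end
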